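/- arXiv:2109.01617 — 3 statements merged into one kernel-verified Lean document; each statement's English description precedes it below -/
import Mathlib

section
/- Let μ be a probability measure on paths satisfying the exponential intersection tails property: there exist C, α > 0 with (μ × μ)(|p₁ ∩ p₂| ≥ k) ≤ C e^{−αk} for all k ≥ 1. Suppose λ ∈ (0,1) satisfies λ^{-2} ≤ 1 + 2/β with β large. Then E_{μ×μ}[(1/λ²)^{|p₁ ∩ p₂|}] ≤ 1 + a·(log β)/β for some constant a depending only on C and α, provided β is larger than some β* depending only on C, α. -/
open MeasureTheory Real
open scoped ENNReal

/-! Writing `r ^ n = 1 + (r - 1) ∑_{k < n} r ^ k` and integrating term by term gives the identity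
`E[r ^ X] = 1 + (r - 1) ∑_k r ^ k P(X > k)`. Under a geometric tail `P(X > k) ≤ c θ ^ k` with
`r θ < 1` the series is at most `c / (1 - r θ)`. For `r = λ⁻² ≤ 1 + 2/β ≤ exp (α/2)` and
`θ = exp (-α)` this is bounded uniformly in `β`, so the excess `E[r ^ X] - 1` is
`O(1/β)`, hence at most `a log β / β` once `log β ≥ 1`. -/

section GeometricMoment

variable {Ω : Type*} [MeasurableSpace Ω] {ν : Measure Ω} {X : Ω → ℕ}

lemma lintegral_sum_range_eq_tsum_mul_measure (hX : Measurable X) (f : ℕ → ℝ≥0∞) :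
    ∫⁻ ω, ∑ k ∈ Finset.range (X ω), f k ∂ν = ∑' k, f k * ν {ω | k < X ω} := by
  have hmeas (k : ℕ) : MeasurableSet {ω | k < X ω} := hX (measurableSet_Ioi (a := k))
  have hind (ω : Ω) : ∑ k ∈ Finset.range (X ω), f k =
      ∑' k, {ω | k < X ω}.indicator (fun _ => f k) ω := by
    rw [sum_eq_tsum_indicator]
    congr with k
    simp [Set.indicator_apply]
  simp_rw [hind]
  rw [lintegral_tsum fun k => (measurable_const.indicator (hmeas k)).aemeasurable]
  exact tsum_congr fun k => lintegral_indicator_const (hmeas k) _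

lemma ofReal_pow_eq_one_add_mul_sum {r : ℝ} (hr : 1 ≤ r) (n : ℕ) :
    ENNReal.ofReal (r ^ n) =
      1 + ENNReal.ofReal (r - 1) * ∑ k ∈ Finset.range n, ENNReal.ofReal (r ^ k) := by
  have hr0 : 0 ≤ r := zero_le_one.trans hr
  rw [← ENNReal.ofReal_sum_of_nonneg fun k _ => pow_nonneg hr0 k,
    ← ENNReal.ofReal_mul (sub_nonneg.mpr hr), ← ENNReal.ofReal_one,
    ← ENNReal.ofReal_add zero_le_one (by positivity), mul_comm, geom_sum_mul]
  ring_nf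

lemma lintegral_ofReal_pow_eq (hX : Measurable X) {r : ℝ} (hr : 1 ≤ r) :
    ∫⁻ ω, ENNReal.ofReal (r ^ X ω) ∂ν =
      ν Set.univ + ENNReal.ofReal (r - 1) * ∑' k, ENNReal.ofReal (r ^ k) * ν {ω | k < X ω} := by
  rw [lintegral_congr fun ω => ofReal_pow_eq_one_add_mul_sum hr (X ω),
    lintegral_add_left measurable_const, lintegral_const_mul' _ _ ENNReal.ofReal_ne_top,
    lintegral_sum_range_eq_tsum_mul_measure hX, lintegral_one]

lemma tsum_pow_mul_measure_le_of_tail_le [IsFiniteMeasure ν] {r θ c : ℝ} (hr : 1 ≤ r)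
    (hθ : 0 ≤ θ) (hrθ : r * θ < 1) (htail : ∀ k : ℕ, (ν {ω | k < X ω}).toReal ≤ c * θ ^ k) :
    ∑' k, ENNReal.ofReal (r ^ k) * ν {ω | k < X ω} ≤ ENNReal.ofReal (c / (1 - r * θ)) := by
  have hc : 0 ≤ c := by simpa using ENNReal.toReal_nonneg.trans (htail 0)
  have hrθ0 : 0 ≤ r * θ := mul_nonneg (zero_le_one.trans hr) hθ
  have hterm (k : ℕ) :
      ENNReal.ofReal (r ^ k) * ν {ω | k < X ω} ≤ ENNReal.ofReal (c * (r * θ) ^ k) := by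
    rw [← ENNReal.ofReal_toReal (measure_ne_top ν {ω | k < X ω}),
      ← ENNReal.ofReal_mul (by positivity)]
    refine ENNReal.ofReal_le_ofReal ?_
    calc r ^ k * (ν {ω | k < X ω}).toReal ≤ r ^ k * (c * θ ^ k) := by gcongr; exact htail k
      _ = c * (r * θ) ^ k := by ring
  calc ∑' k, ENNReal.ofReal (r ^ k) * ν {ω | k < X ω}
      ≤ ∑' k, ENNReal.ofReal (c * (r * θ) ^ k) := ENNReal.tsum_le_tsum hterm
    _ = ENNReal.ofReal (c / (1 - r * θ)) := by
      rw [← ENNReal.ofReal_tsum_of_nonneg (fun k => by positivity)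
        ((summable_geometric_of_lt_one hrθ0 hrθ).mul_left c), tsum_mul_left,
        tsum_geometric_of_lt_one hrθ0 hrθ, div_eq_mul_inv]

lemma integral_pow_le_of_tail_le [IsProbabilityMeasure ν] (hX : Measurable X) {r θ c : ℝ}
    (hr : 1 ≤ r) (hθ : 0 ≤ θ) (hrθ : r * θ < 1)
    (htail : ∀ k : ℕ, (ν {ω | k < X ω}).toReal ≤ c * θ ^ k) :
    ∫ ω, r ^ X ω ∂ν ≤ 1 + (r - 1) * (c / (1 - r * θ)) := by
  have hc : 0 ≤ c := by simpa using ENNReal.toReal_nonneg.trans (htail 0)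
  have hbound : ∫⁻ ω, ENNReal.ofReal (r ^ X ω) ∂ν ≤
      ENNReal.ofReal (1 + (r - 1) * (c / (1 - r * θ))) := by
    rw [lintegral_ofReal_pow_eq hX hr, measure_univ,
      ENNReal.ofReal_add zero_le_one (by nlinarith [div_nonneg hc (sub_nonneg.mpr hrθ.le)]),
      ENNReal.ofReal_one, ENNReal.ofReal_mul (sub_nonneg.mpr hr)]
    gcongr
    exact tsum_pow_mul_measure_le_of_tail_le hr hθ hrθ htail
  have hmeas : Measurable fun ω => r ^ X ω := measurable_from_nat.comp hX
  rw [integral_eq_lintegral_of_nonneg_ae (.of_forall fun ω => by positivity)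
    hmeas.aestronglyMeasurable]
  exact ENNReal.toReal_le_of_le_ofReal (by positivity) hbound


lemma measure_lt_le_of_exp_tail {C α : ℝ}
    (htail : ∀ k : ℕ, 1 ≤ k → (ν {ω | k ≤ X ω}).toReal ≤ C * exp (-α * k)) (k : ℕ) :
    (ν {ω | k < X ω}).toReal ≤ C * exp (-α) * exp (-α) ^ k := by
  have hexp : exp (-α * ((k + 1 : ℕ) : ℝ)) = exp (-α) * exp (-α) ^ k := by
    rw [← exp_nat_mul, ← exp_add]; push_cast; ring_nf
  have := htail (k + 1) k.succ_pos
  rwa [hexp, ← mul_assoc] at this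

end GeometricMoment

lemma mul_exp_neg_le_exp_neg_half {r α : ℝ} (hr : r ≤ 1 + α / 2) :
    r * exp (-α) ≤ exp (-(α / 2)) :=
  calc r * exp (-α) ≤ exp (α / 2) * exp (-α) := by
        gcongr
        linarith [add_one_le_exp (α / 2)]
    _ = exp (-(α / 2)) := by rw [← exp_add]; ring_nf

/-- Second-moment estimate (Abbe et al.): if `μ` is a probability measure on paths whose
number of common edges `N p₁ p₂` has exponential intersection tails with constants `C, α`,
and `λ ∈ (0,1)` satisfies `λ⁻² ≤ 1 + 2/β`, then for `β` large (depending only on `C, α`),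
`E_{μ×μ}[(1/λ²)^{|p₁ ∩ p₂|}] ≤ 1 + a (log β)/β` with `a` depending only on `C, α`. -/
theorem stmt3 (C α : ℝ) (hC : 0 < C) (hα : 0 < α) :
    ∃ a βstar : ℝ, 0 < a ∧ 0 < βstar ∧
      ∀ {P : Type} [MeasurableSpace P] (μ : Measure P) [IsProbabilityMeasure μ]
        (N : P × P → ℕ), Measurable N →
        (∀ k : ℕ, 1 ≤ k →
          ((μ.prod μ) {q | k ≤ N q}).toReal ≤ C * Real.exp (-α * k)) →
        ∀ β : ℝ, βstar ≤ β →
        ∀ lam : ℝ, lam ∈ Set.Ioo (0 : ℝ) 1 → (lam ^ 2)⁻¹ ≤ 1 + 2 / β →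
          (∫ q, ((lam ^ 2)⁻¹) ^ (N q) ∂(μ.prod μ)) ≤ 1 + a * Real.log β / β := by
  set ρ := exp (-(α / 2))
  have hρ : ρ < 1 := exp_lt_one_iff.mpr (by linarith)
  refine ⟨2 * C / (1 - ρ), max (exp 1) (4 / α), div_pos (by positivity) (sub_pos.mpr hρ),
    (exp_pos 1).trans_le (le_max_left _ _), ?_⟩
  intro P _ μ _ N hN htail β hβ lam ⟨hlam0, hlam1⟩ hr
  set r := (lam ^ 2)⁻¹
  have hβ0 : 0 < β := (exp_pos 1).trans_le ((le_max_left _ _).trans hβ)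
  have hlogβ : 1 ≤ log β := (le_log_iff_exp_le hβ0).mpr ((le_max_left _ _).trans hβ)
  have hβα : 2 / β ≤ α / 2 := by
    have := (le_max_right _ _).trans hβ
    rw [div_le_iff₀ hα] at this
    rw [div_le_iff₀ hβ0]
    linarith
  have hr1 : 1 ≤ r := (one_le_inv₀ (by positivity)).mpr (by nlinarith)
  have hrθ : r * exp (-α) ≤ ρ := mul_exp_neg_le_exp_neg_half (by linarith)
  calc ∫ q, r ^ N q ∂μ.prod μ
      ≤ 1 + (r - 1) * (C * exp (-α) / (1 - r * exp (-α))) :=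
        integral_pow_le_of_tail_le hN hr1 (exp_pos _).le (hrθ.trans_lt hρ)
          (measure_lt_le_of_exp_tail htail)
    _ ≤ 1 + 2 / β * (C / (1 - ρ)) := by
        have hgap : 0 < 1 - r * exp (-α) := by linarith
        gcongr 1 + ?_ * (?_ / ?_)
        · linarith
        · exact mul_le_of_le_one_right hC.le (Real.exp_le_one_iff.mpr (by linarith))
        · linarith
    _ = 1 + 2 * C / (1 - ρ) * 1 / β := by ring
    _ ≤ 1 + 2 * C / (1 - ρ) * log β / β := by
        gcongr
end

section
/- Let X be a nonnegative-integer-valued random variable with P(X ≥ k) ≤ C e^{−αk} for all k ≥ 1, where C, α > 0. Then there exist constants a > 0 and β* > 0 (depending only on C, α) such that for all β ≥ β*, E[(1 + 2/β)^X] ≤ 1 + a·(log β)/β. -/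
open MeasureTheory Real

/-!
Write `l = 1 + 2/β` and `q = e^{-α}`. Summing by parts, `E[l^X] = 1 + ∑ₖ (l - 1) l^k P(X > k)`,
and the tail bound `P(X > k) ≤ C q^{k+1}` turns the series into a geometric one with ratio `l q`.
Once `β ≥ 4 / (e^α - 1)` this ratio is at most `(1 + q) / 2`, so the sum is `O(l - 1) = O(1/β)`,
which is below `a log β / β` as soon as `log β ≥ 1`.
-/

open Finset in
theorem lintegral_sum_range_eq_tsum_mul_meas_lt {Ω : Type*} [MeasurableSpace Ω] (μ : Measure Ω)
    {X : Ω → ℕ} (hX : Measurable X) (g : ℕ → ENNReal) :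
    ∫⁻ ω, ∑ k ∈ range (X ω), g k ∂μ = ∑' k, g k * μ {ω | k < X ω} := by
  have hset : ∀ k, MeasurableSet {ω | k < X ω} := fun k => hX measurableSet_Ioi
  calc ∫⁻ ω, ∑ k ∈ range (X ω), g k ∂μ
      = ∫⁻ ω, ∑' k, {ω | k < X ω}.indicator (fun _ => g k) ω ∂μ := by
        refine lintegral_congr fun ω => ?_
        rw [sum_eq_tsum_indicator]
        congr with k
        simp [Set.indicator_apply]
    _ = ∑' k, ∫⁻ ω, {ω | k < X ω}.indicator (fun _ => g k) ω ∂μ :=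
        lintegral_tsum fun k => (measurable_const.indicator (hset k)).aemeasurable
    _ = ∑' k, g k * μ {ω | k < X ω} := by
        simp only [lintegral_indicator_const (hset _)]

open Finset in
theorem pow_eq_one_add_sum_range_mul_pow (l : ℝ) (n : ℕ) :
    l ^ n = 1 + ∑ k ∈ range n, (l - 1) * l ^ k := by
  rw [← mul_sum, mul_comm, geom_sum_mul]
  ring

theorem lintegral_ofReal_pow_eq_one_add_tsum {Ω : Type*} [MeasurableSpace Ω] (P : Measure Ω)
    [IsProbabilityMeasure P] {X : Ω → ℕ} (hX : Measurable X) {l : ℝ} (hl : 1 ≤ l) :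
    ∫⁻ ω, ENNReal.ofReal (l ^ X ω) ∂P
      = 1 + ∑' k, ENNReal.ofReal ((l - 1) * l ^ k) * P {ω | k < X ω} := by
  have hterm : ∀ k : ℕ, 0 ≤ (l - 1) * l ^ k := fun k =>
    mul_nonneg (sub_nonneg.mpr hl) (pow_nonneg (zero_le_one.trans hl) k)
  have hpt : ∀ n : ℕ, ENNReal.ofReal (l ^ n)
      = 1 + ∑ k ∈ Finset.range n, ENNReal.ofReal ((l - 1) * l ^ k) := fun n => by
    rw [pow_eq_one_add_sum_range_mul_pow, ENNReal.ofReal_add zero_le_one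
      (Finset.sum_nonneg fun k _ => hterm k), ENNReal.ofReal_one,
      ENNReal.ofReal_sum_of_nonneg fun k _ => hterm k]
  simp_rw [hpt]
  rw [lintegral_add_left measurable_const, lintegral_const, measure_univ, mul_one,
    lintegral_sum_range_eq_tsum_mul_meas_lt P hX]

theorem integral_pow_le_of_meas_lt_le_geometric {Ω : Type*} [MeasurableSpace Ω] (P : Measure Ω)
    [IsProbabilityMeasure P] {X : Ω → ℕ} (hX : Measurable X) {C q l : ℝ} (hC : 0 ≤ C)
    (hq : 0 ≤ q) (hl : 1 ≤ l) (hlq : l * q < 1)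
    (htail : ∀ k : ℕ, P {ω | k < X ω} ≤ ENNReal.ofReal (C * q ^ (k + 1))) :
    ∫ ω, l ^ X ω ∂P ≤ 1 + (l - 1) * C * q / (1 - l * q) := by
  have hl0 : 0 ≤ l := zero_le_one.trans hl
  have hl1 : 0 ≤ l - 1 := sub_nonneg.mpr hl
  have hlq' : 0 < 1 - l * q := sub_pos.mpr hlq
  have hgeom : ∀ k : ℕ, 0 ≤ (l - 1) * C * q * (l * q) ^ k := fun k => by positivity
  have hterm : ∀ k : ℕ, ENNReal.ofReal ((l - 1) * l ^ k) * P {ω | k < X ω}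
      ≤ ENNReal.ofReal ((l - 1) * C * q * (l * q) ^ k) := fun k => by
    calc ENNReal.ofReal ((l - 1) * l ^ k) * P {ω | k < X ω}
        ≤ ENNReal.ofReal ((l - 1) * l ^ k) * ENNReal.ofReal (C * q ^ (k + 1)) := by
          gcongr; exact htail k
      _ = ENNReal.ofReal ((l - 1) * C * q * (l * q) ^ k) := by
          rw [← ENNReal.ofReal_mul (by positivity)]
          ring_nf
  have hsum : ∑' k : ℕ, ENNReal.ofReal ((l - 1) * l ^ k) * P {ω | k < X ω}
      ≤ ENNReal.ofReal ((l - 1) * C * q / (1 - l * q)) := by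
    calc ∑' k : ℕ, ENNReal.ofReal ((l - 1) * l ^ k) * P {ω | k < X ω}
        ≤ ∑' k : ℕ, ENNReal.ofReal ((l - 1) * C * q * (l * q) ^ k) := ENNReal.tsum_le_tsum hterm
      _ = ENNReal.ofReal (∑' k : ℕ, (l - 1) * C * q * (l * q) ^ k) :=
          (ENNReal.ofReal_tsum_of_nonneg hgeom
            ((summable_geometric_of_lt_one (by positivity) hlq).mul_left _)).symm
      _ = ENNReal.ofReal ((l - 1) * C * q / (1 - l * q)) := by
          rw [tsum_mul_left, tsum_geometric_of_lt_one (by positivity) hlq, div_eq_mul_inv]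
  have hbound : 0 ≤ (l - 1) * C * q / (1 - l * q) := by positivity
  rw [integral_eq_lintegral_of_nonneg_ae (.of_forall fun ω => pow_nonneg hl0 _)
    ((measurable_from_top (f := fun n : ℕ => l ^ n)).comp hX).aestronglyMeasurable]
  refine ENNReal.toReal_le_of_le_ofReal (by positivity) ?_
  rw [lintegral_ofReal_pow_eq_one_add_tsum P hX hl, ENNReal.ofReal_add zero_le_one hbound,
    ENNReal.ofReal_one]
  gcongr

theorem meas_lt_le_of_meas_le_exp {Ω : Type*} [MeasurableSpace Ω] (P : Measure Ω)
    [IsFiniteMeasure P] {X : Ω → ℕ} {C α : ℝ}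
    (htail : ∀ k : ℕ, 1 ≤ k → (P {ω | k ≤ X ω}).toReal ≤ C * exp (-α * k)) (k : ℕ) :
    P {ω | k < X ω} ≤ ENNReal.ofReal (C * exp (-α) ^ (k + 1)) := by
  rw [← exp_nat_mul, mul_comm (_ : ℝ) (-α), ← ENNReal.ofReal_toReal (measure_ne_top P _)]
  exact ENNReal.ofReal_le_ofReal (htail (k + 1) k.succ_pos)

/-- If `X` is an ℕ-valued random variable with exponential tails
`P(X ≥ k) ≤ C e^{-αk}` for `k ≥ 1`, then there are `a, β* > 0` depending only on `C, α`
such that for all `β ≥ β*`, `E[(1 + 2/β)^X] ≤ 1 + a (log β)/β`. -/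
theorem stmt4 (C α : ℝ) (hC : 0 < C) (hα : 0 < α) :
    ∃ a βstar : ℝ, 0 < a ∧ 0 < βstar ∧
      ∀ {Ω : Type} [MeasurableSpace Ω] (P : Measure Ω) [IsProbabilityMeasure P]
        (X : Ω → ℕ), Measurable X →
        (∀ k : ℕ, 1 ≤ k → (P {ω | k ≤ X ω}).toReal ≤ C * Real.exp (-α * k)) →
        ∀ β : ℝ, βstar ≤ β →
          (∫ ω, (1 + 2 / β) ^ (X ω) ∂P) ≤ 1 + a * Real.log β / β := by
  set q := exp (-α)
  have hq0 : 0 < q := exp_pos _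
  have hq1 : q < 1 := exp_lt_one_iff.mpr (neg_neg_of_pos hα)
  have hαq : exp α * q = 1 := by rw [← exp_add, add_neg_cancel, exp_zero]
  refine ⟨4 * C * q / (1 - q), max (exp 1) (4 / (exp α - 1)),
    div_pos (by positivity) (sub_pos.mpr hq1), lt_max_of_lt_left (exp_pos 1), ?_⟩
  intro Ω _ P _ X hX htail β hβ
  have hβ0 : 0 < β := (exp_pos 1).trans_le (le_of_max_le_left hβ)
  have hlog : 1 ≤ log β := by simpa using log_le_log (exp_pos 1) (le_of_max_le_left hβ)
  have hβα : 4 ≤ β * (exp α - 1) :=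
    (div_le_iff₀ (sub_pos.mpr (one_lt_exp_iff.mpr hα))).mp (le_of_max_le_right hβ)
  have hratio : (1 + 2 / β) * q ≤ (1 + q) / 2 := by
    have : 2 / β ≤ (exp α - 1) / 2 := by rw [div_le_div_iff₀ hβ0 two_pos]; linarith
    nlinarith
  calc ∫ ω, (1 + 2 / β) ^ X ω ∂P
      ≤ 1 + (1 + 2 / β - 1) * C * q / (1 - (1 + 2 / β) * q) :=
        integral_pow_le_of_meas_lt_le_geometric P hX hC.le hq0.le
          (le_add_of_nonneg_right (by positivity)) (by linarith)
          (meas_lt_le_of_meas_le_exp P htail)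
    _ ≤ 1 + 2 / β * C * q / ((1 - q) / 2) := by
        rw [add_sub_cancel_left]
        gcongr
        linarith
    _ = 1 + 4 * C * q / (1 - q) / β := by field_simp; ring
    _ ≤ 1 + 4 * C * q / (1 - q) * log β / β := by
        gcongr
        exact le_mul_of_one_le_right (div_pos (by positivity) (sub_pos.mpr hq1)).le hlog
end

section
/- Let Λ be a finite graph, and for β > 0 consider the Nishimori-averaged quenched XY measure: disorder ω_{ij} i.i.d. (per unoriented edge, antisymmetric in orientation) with density Z_β⁻¹ e^{β cos ω} on [−π,π), and quenched Gibbs weight proportional to e^{(β/2) Σ_{(ij)∈Ē} cos(θ(i)−θ(j)+ω_{ij})}. Then for any bounded measurable 2π-periodic functions f_{ij}, E_β^{XY}[⟨∏_{(ij)} f_{ij}(θ(i) − θ(j) + ω_{ij})⟩_{ω,β,Λ}] = ∏_{(ij)} (∫_{−π}^π f_{ij}(ω) e^{β cos ω} dω / Z_β). In particular, under the averaged quenched measure, the edge variables θ(i) − θ(j) + ω_{ij} over distinct unoriented edges are i.i.d. with density ρ_β. -/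
open Real MeasureTheory

/-- Spin measure: product of Lebesgue measure on `[0, 2π)` over vertices. -/
noncomputable def spinMeasure (V : Type*) [Fintype V] : Measure (V → ℝ) :=
  Measure.pi fun _ : V => volume.restrict (Set.Ico 0 (2 * π))

/-- Quenched XY Gibbs weight for disorder `η` on the (oriented representatives of the)
edges `E` : `exp(β Σ_{e ∈ E} cos(θ(i) - θ(j) + η_e))` (which equals the weight
`(β/2) Σ` over both orientations). -/
noncomputable def gibbsWeightXY {V : Type*} (E : Finset (V × V)) (β : ℝ)
    (η : ↥E → ℝ) (θ : V → ℝ) : ℝ :=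
  Real.exp (β * ∑ e : ↥E, Real.cos (θ (e : V × V).1 - θ (e : V × V).2 + η e))

/-- Quenched XY Gibbs expectation of an observable `F` of the spins. -/
noncomputable def quenchedExpXY {V : Type*} [Fintype V] (E : Finset (V × V)) (β : ℝ)
    (η : ↥E → ℝ) (F : (V → ℝ) → ℝ) : ℝ :=
  (∫ θ, F θ * gibbsWeightXY E β η θ ∂spinMeasure V) /
    (∫ θ, gibbsWeightXY E β η θ ∂spinMeasure V)

/-- Normalization of the Nishimori edge density. -/
noncomputable def Znish (β : ℝ) : ℝ := ∫ x in (-π)..π, Real.exp (β * Real.cos x)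

/-- Average over the Nishimori disorder: each edge carries an independent angle in
`[-π, π)` with density `Z_β⁻¹ e^{β cos ω}`. -/
noncomputable def nishimoriAvg {V : Type*} (E : Finset (V × V)) (β : ℝ)
    (G : (↥E → ℝ) → ℝ) : ℝ :=
  (∫ η, G η * ∏ e : ↥E, Real.exp (β * Real.cos (η e))
      ∂(Measure.pi fun _ : ↥E => volume.restrict (Set.Ico (-π) π))) / Znish β ^ E.card

/-! Reducing angles mod `2π`, spins and disorder live in the compact groups `𝕋^V` and `𝕋^E`.
Writing `P(ω) = ∏ₑ e^{β cos ωₑ}` for the disorder weight and `δθ` for the edge gradient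
`θ(i) - θ(j)`, the Gibbs weight is `P(δθ + ω)` and the quenched partition function is
`Z(ω) = ∫ P(δθ + ω) dθ`, which is invariant under `ω ↦ ω + δφ`. The averaged quenched
expectation of `Φ(δθ + ω)` is `∫∫ Φ(δθ + ω) P(δθ + ω) P(ω) / Z(ω)`; substituting
`ω ↦ ω - δθ` turns `P(ω)` into `P(ω - δθ)`, whose `θ`-integral cancels `Z(ω)`, leaving
`∫ Φ P`, which factorizes over the edges. -/

section GaugeAverage

variable {H K : Type*} [MeasureSpace H] [AddCommGroup H] [AddCommGroup K]

/-- For `δ = edgeGrad E` and `P = edgeBoltzmann β` this is the quenched partition function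
`Z_{ω,β,Λ}`. -/
noncomputable def gaugeIntegral (δ : H →+ K) (P : K → ℝ) (k : K) : ℝ := ∫ h, P (δ h + k)

lemma gaugeIntegral_map_add [MeasurableAdd H] [(volume : Measure H).IsAddRightInvariant]
    (δ : H →+ K) (P : K → ℝ) (h₀ : H) (k : K) :
    gaugeIntegral δ P (δ h₀ + k) = gaugeIntegral δ P k := by
  rw [gaugeIntegral, gaugeIntegral, ← integral_add_right_eq_self (fun h => P (δ h + k)) h₀]
  simp only [map_add, add_assoc]

lemma integral_map_neg_add [MeasurableNeg H] [(volume : Measure H).IsNegInvariant]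
    (δ : H →+ K) (P : K → ℝ) (k : K) :
    ∫ h, P (δ (-h) + k) = gaugeIntegral δ P k :=
  integral_neg_eq_self (fun h => P (δ h + k)) volume

lemma measurable_gaugeIntegral [MeasurableSpace K] [MeasurableAdd₂ K]
    [SFinite (volume : Measure H)] {δ : H →+ K} (hδ : Measurable δ) {P : K → ℝ}
    (hP : Measurable P) :
    Measurable (gaugeIntegral δ P) :=
  (hP.comp ((hδ.comp measurable_snd).add measurable_fst)).stronglyMeasurable
    |>.integral_prod_right' (ν := (volume : Measure H)) |>.measurable

lemma mul_measureReal_univ_le_gaugeIntegral [MeasurableSpace K] [MeasurableAdd K]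
    [IsFiniteMeasure (volume : Measure H)] {δ : H →+ K} (hδ : Measurable δ) {P : K → ℝ}
    (hP : Measurable P) {c C : ℝ} (hPc : ∀ k, P k ∈ Set.Icc c C) (k : K) :
    c * (volume : Measure H).real Set.univ ≤ gaugeIntegral δ P k := by
  have hint : Integrable (fun h => P (δ h + k)) :=
    .of_bound (hP.comp (hδ.add_const k)).aestronglyMeasurable (max |c| |C|)
      (ae_of_all _ fun h => abs_le_max_abs_abs (hPc _).1 (hPc _).2)
  simpa [gaugeIntegral, mul_comm] using
    integral_mono (integrable_const c) hint fun h => (hPc (δ h + k)).1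

theorem integral_gaugeIntegral_div_gaugeIntegral_mul [MeasureSpace K] [MeasurableAdd₂ K]
    [MeasurableAdd H] [MeasurableNeg H] [IsFiniteMeasure (volume : Measure H)]
    [NeZero (volume : Measure H)] [IsFiniteMeasure (volume : Measure K)]
    [(volume : Measure H).IsAddRightInvariant] [(volume : Measure H).IsNegInvariant]
    [(volume : Measure K).IsAddRightInvariant]
    {δ : H →+ K} (hδ : Measurable δ) {Φ P : K → ℝ} (hΦ : Measurable Φ)
    (hP : Measurable P)
    {M c C : ℝ} (hΦM : ∀ k, |Φ k| ≤ M) (hc : 0 < c) (hPc : ∀ k, P k ∈ Set.Icc c C) :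
    ∫ k, gaugeIntegral δ Φ k / gaugeIntegral δ P k * P k = ∫ k, Φ k := by
  set Z := gaugeIntegral δ P
  set c' := c * (volume : Measure H).real Set.univ
  have hc' : 0 < c' := mul_pos hc measureReal_univ_pos
  have hZ k : c' ≤ Z k := mul_measureReal_univ_le_gaugeIntegral hδ hP hPc k
  have hZadd h k : Z (δ h + k) = Z k := gaugeIntegral_map_add δ P h k
  have hZm : Measurable Z := measurable_gaugeIntegral hδ hP
  have hbound {x y z : ℝ} (hx : |x| ≤ M) (hy : y ∈ Set.Icc c C) (hz : c' ≤ z) :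
      ‖x * (y / z)‖ ≤ M * (C / c') := by
    have hz₀ : 0 < z := hc'.trans_le hz
    rw [Real.norm_eq_abs, abs_mul, abs_of_pos (div_pos (hc.trans_le hy.1) hz₀)]
    exact mul_le_mul hx (div_le_div₀ (hc.le.trans hy.1 |>.trans hy.2) hy.2 hc' hz)
      (div_pos (hc.trans_le hy.1) hz₀).le ((abs_nonneg _).trans hx)
  have hint₁ : Integrable (Function.uncurry fun k h => Φ (δ h + k) * (P k / Z k))
      ((volume : Measure K).prod volume) :=
    .of_bound ((hΦ.comp ((hδ.comp measurable_snd).add measurable_fst)).mul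
      ((hP.div hZm).comp measurable_fst)).aestronglyMeasurable _
      (ae_of_all _ fun _ => hbound (hΦM _) (hPc _) (hZ _))
  have hint₂ : Integrable (Function.uncurry fun h k => Φ k * (P (δ (-h) + k) / Z k))
      ((volume : Measure H).prod volume) :=
    .of_bound ((hΦ.comp measurable_snd).mul ((hP.comp ((hδ.comp measurable_fst.neg).add
      measurable_snd)).div (hZm.comp measurable_snd))).aestronglyMeasurable _
      (ae_of_all _ fun _ => hbound (hΦM _) (hPc _) (hZ _))
  calc ∫ k, gaugeIntegral δ Φ k / Z k * P k
      = ∫ k, ∫ h, Φ (δ h + k) * (P k / Z k) := by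
        congr with k
        rw [integral_mul_const, gaugeIntegral]; ring
    _ = ∫ h, ∫ k, Φ (δ h + k) * (P k / Z k) := integral_integral_swap hint₁
    _ = ∫ h, ∫ k, Φ k * (P (δ (-h) + k) / Z k) := by
        congr with h
        rw [← integral_add_right_eq_self _ (δ (-h))]
        congr with k
        rw [add_comm k, hZadd, ← add_assoc, ← map_add, add_neg_cancel, map_zero, zero_add]
    _ = ∫ k, ∫ h, Φ k * (P (δ (-h) + k) / Z k) := integral_integral_swap hint₂
    _ = ∫ k, Φ k := by
        congr with k
        simp_rw [mul_div_assoc', integral_div, integral_const_mul, integral_map_neg_add]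
        exact mul_div_cancel_right₀ _ (hc'.trans_le (hZ k)).ne'

end GaugeAverage

section EdgeGradient

variable {G V : Type*} [AddCommGroup G] (E : Finset (V × V))

def edgeGrad : (V → G) →+ (↥E → G) where
  toFun θ e := θ (e : V × V).1 - θ (e : V × V).2
  map_zero' := by ext; simp
  map_add' θ θ' := by ext; simp only [Pi.add_apply]; abel

lemma measurable_edgeGrad [MeasurableSpace G] [MeasurableSub₂ G] :
    Measurable (edgeGrad (G := G) E) :=
  measurable_pi_lambda _ fun _ => (measurable_pi_apply _).sub (measurable_pi_apply _)

end EdgeGradient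

namespace Function.Periodic

variable {α : Type*} {T : ℝ} {g : ℝ → α}

lemma lift_induction (hg : Periodic g T) {p : α → Prop} (h : ∀ x, p (g x))
    (y : AddCircle T) : p (hg.lift y) := by
  induction y using QuotientAddGroup.induction_on with
  | H x => rw [hg.lift_coe]; exact h x

lemma abs_prod_lift_le {ι : Type*} [Fintype ι] {f : ι → ℝ → ℝ}
    (hf : ∀ i, Periodic (f i) T) {M : ι → ℝ} (hM : ∀ i x, |f i x| ≤ M i)
    (k : ι → AddCircle T) :
    |∏ i, (hf i).lift (k i)| ≤ ∏ i, M i :=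
  (Finset.abs_prod _ _).trans_le <| Finset.prod_le_prod (fun _ _ => abs_nonneg _) fun i _ =>
    (hf i).lift_induction (p := (|·| ≤ M i)) (hM i) _

lemma measurable_lift [MeasurableSpace α] (hg : Periodic g T) (h : Measurable g) :
    Measurable hg.lift :=
  h

end Function.Periodic

lemma integral_pi_Ico_comp_coe {ι F : Type*} [Fintype ι] [NormedAddCommGroup F]
    [NormedSpace ℝ F] (T a : ℝ) [Fact (0 < T)] {Ψ : (ι → AddCircle T) → F}
    (hΨ : AEStronglyMeasurable Ψ volume) :
    ∫ x, Ψ (fun i => (x i : AddCircle T))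
        ∂(Measure.pi fun _ : ι => volume.restrict (Set.Ico a (a + T))) = ∫ y, Ψ y := by
  have hIco : (Measure.pi fun _ : ι => volume.restrict (Set.Ico a (a + T)))
      = Measure.pi fun _ : ι => volume.restrict (Set.Ioc a (a + T)) :=
    congrArg Measure.pi (funext fun _ => Measure.restrict_congr_set Ico_ae_eq_Ioc)
  have hmp : MeasurePreserving (fun (x : ι → ℝ) (i : ι) => (x i : AddCircle T))
      (Measure.pi fun _ : ι => volume.restrict (Set.Ioc a (a + T))) volume := by
    simpa only [← volume_pi] using measurePreserving_pi _ (fun _ : ι => volume)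
      (fun _ => AddCircle.measurePreserving_mk T a)
  rw [hIco, ← hmp.map_eq, integral_map hmp.measurable.aemeasurable (hmp.map_eq ▸ hΨ)]

instance Real.fact_zero_lt_two_pi : Fact (0 < 2 * π) := ⟨two_pi_pos⟩

section XY

noncomputable def circleBoltzmann (β : ℝ) : AddCircle (2 * π) → ℝ :=
  (cos_periodic.comp fun x => exp (β * x)).lift

lemma circleBoltzmann_coe (β x : ℝ) : circleBoltzmann β x = exp (β * cos x) :=
  Function.Periodic.lift_coe _ x

lemma measurable_circleBoltzmann (β : ℝ) : Measurable (circleBoltzmann β) :=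
  Function.Periodic.measurable_lift _ (by fun_prop)

lemma circleBoltzmann_mem_Icc (β : ℝ) (y : AddCircle (2 * π)) :
    circleBoltzmann β y ∈ Set.Icc (exp (-|β|)) (exp |β|) := by
  refine Function.Periodic.lift_induction _ (fun x => ?_) y
  have : |β * cos x| ≤ |β| := by
    rw [abs_mul]; exact mul_le_of_le_one_right (abs_nonneg β) (abs_cos_le_one x)
  exact ⟨exp_le_exp.2 (abs_le.1 this).1, exp_le_exp.2 (abs_le.1 this).2⟩

variable {ι : Type*} [Fintype ι]

noncomputable def edgeBoltzmann (β : ℝ) (k : ι → AddCircle (2 * π)) : ℝ :=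
  ∏ i, circleBoltzmann β (k i)

lemma measurable_edgeBoltzmann (β : ℝ) : Measurable (edgeBoltzmann (ι := ι) β) :=
  Finset.measurable_prod _ fun i _ =>
    (measurable_circleBoltzmann β).comp (measurable_pi_apply i)

lemma edgeBoltzmann_mem_Icc (β : ℝ) (k : ι → AddCircle (2 * π)) :
    edgeBoltzmann β k ∈
      Set.Icc (exp (-|β|) ^ Fintype.card ι) (exp |β| ^ Fintype.card ι) := by
  have h i := circleBoltzmann_mem_Icc β (k i)
  rw [edgeBoltzmann, ← Finset.card_univ, ← Finset.prod_const, ← Finset.prod_const]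
  exact ⟨Finset.prod_le_prod (fun i _ => (exp_pos _).le) fun i _ => (h i).1,
    Finset.prod_le_prod (fun i _ => (exp_pos _).le.trans (h i).1) fun i _ => (h i).2⟩

lemma abs_mul_edgeBoltzmann_le (β : ℝ) {a M : ℝ} (ha : |a| ≤ M)
    (k : ι → AddCircle (2 * π)) :
    |a * edgeBoltzmann β k| ≤ M * exp |β| ^ Fintype.card ι := by
  have hP := edgeBoltzmann_mem_Icc β k
  rw [abs_mul, abs_of_pos ((pow_pos (exp_pos _) _).trans_le hP.1)]
  exact mul_le_mul ha hP.2 ((pow_pos (exp_pos _) _).le.trans hP.1) ((abs_nonneg _).trans ha)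

end XY

lemma integral_prod_mul_edgeBoltzmann {ι : Type*} [Fintype ι] (β : ℝ)
    (φ : ι → AddCircle (2 * π) → ℝ) :
    ∫ k, (∏ i, φ i (k i)) * edgeBoltzmann β k =
      ∏ i, ∫ y, φ i y * circleBoltzmann β y := by
  simp_rw [edgeBoltzmann, ← Finset.prod_mul_distrib]
  exact integral_fintype_prod_eq_prod (fun i y => φ i y * circleBoltzmann β y)

lemma integral_lift_mul_circleBoltzmann {g : ℝ → ℝ} (hg : Function.Periodic g (2 * π))
    (β : ℝ) :
    ∫ y, hg.lift y * circleBoltzmann β y = ∫ x in (-π)..π, g x * exp (β * cos x) := by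
  rw [← AddCircle.intervalIntegral_preimage (2 * π) (-π), show -π + 2 * π = π by ring]
  simp only [hg.lift_coe, circleBoltzmann_coe]

section Lattice

variable {V : Type*} (E : Finset (V × V))

noncomputable def edgeAngle (θ : V → ℝ) (η : ↥E → ℝ) : ↥E → AddCircle (2 * π) :=
  fun e => ((θ (e : V × V).1 - θ (e : V × V).2 + η e : ℝ) : AddCircle (2 * π))

lemma edgeAngle_eq_edgeGrad_add (θ : V → ℝ) (η : ↥E → ℝ) :
    edgeAngle E θ η =
      edgeGrad E (fun i => (θ i : AddCircle (2 * π))) + fun e => (η e : AddCircle (2 * π)) := by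
  ext e
  simp [edgeAngle, edgeGrad]

lemma gibbsWeightXY_eq_edgeBoltzmann (β : ℝ) (η : ↥E → ℝ) (θ : V → ℝ) :
    gibbsWeightXY E β η θ = edgeBoltzmann β (edgeAngle E θ η) := by
  simp only [gibbsWeightXY, edgeBoltzmann, edgeAngle, circleBoltzmann_coe, Finset.mul_sum,
    exp_sum]

variable [Fintype V]

lemma integral_spinMeasure_eq_gaugeIntegral {Ψ : (↥E → AddCircle (2 * π)) → ℝ}
    (hΨ : Measurable Ψ) (η : ↥E → ℝ) :
    ∫ θ, Ψ (edgeAngle E θ η) ∂spinMeasure V =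
      gaugeIntegral (edgeGrad E) Ψ fun e => (η e : AddCircle (2 * π)) := by
  have hspin : spinMeasure V =
      Measure.pi fun _ : V => volume.restrict (Set.Ico 0 (0 + 2 * π)) := by
    rw [zero_add, spinMeasure]
  simp_rw [hspin, edgeAngle_eq_edgeGrad_add]
  exact integral_pi_Ico_comp_coe (2 * π) 0
    (hΨ.comp ((measurable_edgeGrad E).add_const _)).aestronglyMeasurable

lemma quenchedExpXY_comp_edgeAngle (β : ℝ) {g : (↥E → AddCircle (2 * π)) → ℝ}
    (hg : Measurable g) (η : ↥E → ℝ) :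
    quenchedExpXY E β η (fun θ => g (edgeAngle E θ η)) =
      gaugeIntegral (edgeGrad E) (fun k => g k * edgeBoltzmann β k) (fun e => ↑(η e)) /
        gaugeIntegral (edgeGrad E) (edgeBoltzmann β) (fun e => ↑(η e)) := by
  simp_rw [quenchedExpXY, gibbsWeightXY_eq_edgeBoltzmann]
  rw [integral_spinMeasure_eq_gaugeIntegral E (Ψ := fun k => g k * edgeBoltzmann β k)
      (hg.mul (measurable_edgeBoltzmann β)),
    integral_spinMeasure_eq_gaugeIntegral E (measurable_edgeBoltzmann β)]

end Lattice

lemma nishimoriAvg_comp_coe {V : Type*} (E : Finset (V × V)) (β : ℝ)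
    {F : (↥E → AddCircle (2 * π)) → ℝ} (hF : Measurable F) :
    nishimoriAvg E β (fun η => F fun e => (η e : AddCircle (2 * π))) =
      (∫ k, F k * edgeBoltzmann β k) / Znish β ^ E.card := by
  rw [nishimoriAvg,
    ← integral_pi_Ico_comp_coe (2 * π) (-π) (Ψ := fun k => F k * edgeBoltzmann β k)
      (hF.mul (measurable_edgeBoltzmann β)).aestronglyMeasurable,
    show -π + 2 * π = π by ring]
  simp only [edgeBoltzmann, circleBoltzmann_coe]

theorem stmt11_general {V : Type*} [Fintype V] (E : Finset (V × V)) (β : ℝ)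
    (f : ↥E → ℝ → ℝ)
    (hf_meas : ∀ e, Measurable (f e))
    (hf_bdd : ∀ e, ∃ M, ∀ x, |f e x| ≤ M)
    (hf_per : ∀ e x, f e (x + 2 * π) = f e x) :
    nishimoriAvg E β (fun η => quenchedExpXY E β η
        (fun θ => ∏ e : ↥E, f e (θ (e : V × V).1 - θ (e : V × V).2 + η e))) =
      ∏ e : ↥E, (∫ x in (-π)..π, f e x * Real.exp (β * Real.cos x)) / Znish β := by
  choose M hM using hf_bdd
  have hper e : Function.Periodic (f e) (2 * π) := hf_per e
  -- instance search does not reach this through the product instance on `↥E → AddCircle (2π)`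
  have : (volume : Measure (AddCircle (2 * π))).IsNegInvariant := inferInstance
  set g : (↥E → AddCircle (2 * π)) → ℝ := fun k => ∏ e, (hper e).lift (k e)
  have hg : Measurable g := Finset.measurable_prod _ fun e _ =>
    ((hper e).measurable_lift (hf_meas e)).comp (measurable_pi_apply e)
  have hgP k : |g k * edgeBoltzmann β k| ≤ (∏ e, M e) * exp |β| ^ Fintype.card ↥E :=
    abs_mul_edgeBoltzmann_le β (Function.Periodic.abs_prod_lift_le hper hM k) k
  have hobs (η : ↥E → ℝ) (θ : V → ℝ) :
      ∏ e : ↥E, f e (θ (e : V × V).1 - θ (e : V × V).2 + η e) = g (edgeAngle E θ η) := by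
    simp only [g, edgeAngle, Function.Periodic.lift_coe]
  have hΦ : Measurable fun k => g k * edgeBoltzmann β k := hg.mul (measurable_edgeBoltzmann β)
  have hQ : Measurable fun k =>
      gaugeIntegral (edgeGrad E) (fun k => g k * edgeBoltzmann β k) k /
        gaugeIntegral (edgeGrad E) (edgeBoltzmann β) k :=
    (measurable_gaugeIntegral (measurable_edgeGrad E) hΦ).div
      (measurable_gaugeIntegral (measurable_edgeGrad E) (measurable_edgeBoltzmann β))
  simp_rw [hobs, quenchedExpXY_comp_edgeAngle E β hg]
  refine (nishimoriAvg_comp_coe E β hQ).trans ?_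
  rw [integral_gaugeIntegral_div_gaugeIntegral_mul (measurable_edgeGrad E) hΦ
      (measurable_edgeBoltzmann β) hgP (pow_pos (exp_pos _) _) (edgeBoltzmann_mem_Icc β),
    integral_prod_mul_edgeBoltzmann, Finset.prod_div_distrib, Finset.prod_const, Finset.card_univ,
    Fintype.card_coe]
  simp_rw [integral_lift_mul_circleBoltzmann]

/-- Factorization on the Nishimori line (Lemma 2.1, `h = 0`): the averaged quenched
expectation of a product of `2π`-periodic bounded measurable edge observables
`f_{ij}(θ(i) - θ(j) + ω_{ij})` factorizes, the edge variables being i.i.d. with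
density `ρ_β`. -/
theorem stmt11 {V : Type*} [Fintype V] (E : Finset (V × V)) (β : ℝ) (hβ : 0 < β)
    (f : ↥E → ℝ → ℝ)
    (hf_meas : ∀ e, Measurable (f e))
    (hf_bdd : ∀ e, ∃ M, ∀ x, |f e x| ≤ M)
    (hf_per : ∀ e x, f e (x + 2 * π) = f e x) :
    nishimoriAvg E β (fun η => quenchedExpXY E β η
        (fun θ => ∏ e : ↥E, f e (θ (e : V × V).1 - θ (e : V × V).2 + η e))) =
      ∏ e : ↥E, (∫ x in (-π)..π, f e x * Real.exp (β * Real.cos x)) / Znish β :=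
  stmt11_general E β f hf_meas hf_bdd hf_per
end
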